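/- arXiv:2007.05074 — 5 statements merged into one kernel-verified Lean document; each statement's English description precedes it below -/
import Mathlib

section
/- The Laplace kernel on ℝⁿ is positive semidefinite: for every σ ≠ 0, every q ∈ ℕ, all points x_1,…,x_q ∈ ℝⁿ and all real coefficients α_1,…,α_q, one has ∑_{i=1}^q ∑_{j=1}^q α_i α_j exp(−‖x_i − x_j‖₂ / σ²) ≥ 0. -/
/-!
Gaussian kernels `exp (-t‖x - y‖²)`, `t ≥ 0`, are positive semidefinite: up to a rank-one
Hadamard factor they are the entrywise exponential of a scaled Gram matrix, and the entrywise
exponential preserves positive semidefiniteness by the Schur product theorem applied to its power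
series. Since `√a * C = ∫₀^∞ (1 - exp (-a t)) t ^ (-3/2) dt` with `C > 0`, for weights summing
to zero the quadratic form of `‖x - y‖` is `-1/C` times the integral of those of the Gaussian
kernels against `t ^ (-3/2) dt`, so `‖x - y‖` is conditionally negative definite. Adjoining the point `0` turns this into positive semidefiniteness of
`‖x‖ + ‖y‖ - ‖x - y‖`, and `exp (-c‖x - y‖) = exp (-c‖x‖) exp (-c‖y‖) exp (c (‖x‖ + ‖y‖ - ‖x - y‖))`
is again a rank-one Hadamard factor times an entrywise exponential.
-/

open Matrix MeasureTheory Set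
open scoped ComplexOrder

namespace Matrix

variable {ι 𝕜 : Type*} [Fintype ι] [RCLike 𝕜]

theorem posSemidef_iff_sum_mul_mul_nonneg {A : Matrix ι ι ℝ} :
    A.PosSemidef ↔ A.IsHermitian ∧ ∀ v : ι → ℝ, 0 ≤ ∑ i, ∑ j, v i * v j * A i j := by
  have hform : ∀ v : ι → ℝ, star v ⬝ᵥ (A *ᵥ v) = ∑ i, ∑ j, v i * v j * A i j := fun v => by
    simp only [dotProduct, mulVec, Finset.mul_sum, star_trivial]
    exact Fintype.sum_congr _ _ fun i => Fintype.sum_congr _ _ fun j => by ring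
  simp only [posSemidef_iff_dotProduct_mulVec, hform]

theorem PosSemidef.map_pow {A : Matrix ι ι 𝕜} (hA : A.PosSemidef) (k : ℕ) :
    (A.map (· ^ k)).PosSemidef := by
  induction k with
  | zero => simpa [vecMulVec, Matrix.map] using posSemidef_vecMulVec_self_star (1 : ι → 𝕜)
  | succ k ih =>
    convert ih.hadamard hA using 1
    ext i j
    simp [pow_succ]

theorem PosSemidef.map_exp {A : Matrix ι ι ℝ} (hA : A.PosSemidef) :
    (A.map Real.exp).PosSemidef := by
  refine .of_dotProduct_mulVec_nonneg (hA.isHermitian.map _ fun _ => rfl) fun v => ?_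
  have hseries : HasSum (fun k => (k.factorial : ℝ)⁻¹ * (star v ⬝ᵥ (A.map (· ^ k) *ᵥ v)))
      (star v ⬝ᵥ (A.map Real.exp *ᵥ v)) := by
    simp only [dotProduct, mulVec, map_apply, Finset.mul_sum]
    refine hasSum_sum fun i _ => hasSum_sum fun j _ => ?_
    have hexp := (NormedSpace.expSeries_div_hasSum_exp (A i j)).mul_left (star v i * v j)
    rw [← Real.exp_eq_exp_ℝ] at hexp
    convert hexp using 1 <;> (try funext k) <;> first | rfl | ring
  exact hseries.nonneg fun k =>
    mul_nonneg (by positivity) ((hA.map_pow k).dotProduct_mulVec_nonneg v)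

theorem PosSemidef.exp_add_add {A : Matrix ι ι ℝ} (hA : A.PosSemidef) (f : ι → ℝ) :
    (of fun i j => Real.exp (f i + f j + A i j)).PosSemidef := by
  have hprod : (of fun i j => Real.exp (f i + f j + A i j)) =
      vecMulVec (fun i => Real.exp (f i)) (fun j => Real.exp (f j)) ⊙ A.map Real.exp := by
    ext i j
    simp [vecMulVec_apply, Real.exp_add]
  rw [hprod]
  exact (posSemidef_vecMulVec_self_star _).hadamard hA.map_exp

end Matrix

theorem integrableOn_one_sub_exp_neg_mul_mul_rpow {a : ℝ} (ha : 0 ≤ a) :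
    IntegrableOn (fun t : ℝ => (1 - Real.exp (-(a * t))) * t ^ (-(3 / 2) : ℝ)) (Ioi 0) := by
  have hmeas : AEStronglyMeasurable
      (fun t : ℝ => (1 - Real.exp (-(a * t))) * t ^ (-(3 / 2) : ℝ)) := by
    fun_prop
  have hnonneg : ∀ t : ℝ, 0 < t → 0 ≤ (1 - Real.exp (-(a * t))) * t ^ (-(3 / 2) : ℝ) :=
    fun t ht => mul_nonneg (sub_nonneg.2 (Real.exp_le_one_iff.2 (by nlinarith)))
      (Real.rpow_nonneg ht.le _)
  rw [← Ioc_union_Ioi_eq_Ioi zero_le_one]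
  refine IntegrableOn.union ?_ ?_
  · refine Integrable.mono' (((intervalIntegral.intervalIntegrable_rpow' (a := 0) (b := 1)
      (r := -(1 / 2)) (by norm_num)).1).const_mul a) hmeas.restrict ?_
    filter_upwards [ae_restrict_mem measurableSet_Ioc] with t ⟨ht0, _⟩
    rw [Real.norm_of_nonneg (hnonneg t ht0)]
    calc (1 - Real.exp (-(a * t))) * t ^ (-(3 / 2) : ℝ)
        ≤ a * t * t ^ (-(3 / 2) : ℝ) :=
          mul_le_mul_of_nonneg_right (by linarith [Real.add_one_le_exp (-(a * t))])
            (Real.rpow_nonneg ht0.le _)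
      _ = a * t ^ (-(1 / 2) : ℝ) := by
          rw [mul_assoc, mul_comm t, ← Real.rpow_add_one ht0.ne']
          norm_num
  · refine Integrable.mono' (integrableOn_Ioi_rpow_of_lt (a := -(3 / 2)) (by norm_num) one_pos)
      hmeas.restrict ?_
    filter_upwards [ae_restrict_mem measurableSet_Ioi] with t (ht : 1 < t)
    have ht0 : 0 < t := one_pos.trans ht
    rw [Real.norm_of_nonneg (hnonneg t ht0)]
    exact mul_le_of_le_one_left (Real.rpow_nonneg ht0.le _)
      (sub_le_self _ (Real.exp_pos _).le)

theorem integral_one_sub_exp_neg_mul_rpow_pos :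
    0 < ∫ t in Ioi (0 : ℝ), (1 - Real.exp (-t)) * t ^ (-(3 / 2) : ℝ) := by
  have hint := integrableOn_one_sub_exp_neg_mul_mul_rpow zero_le_one
  simp only [one_mul] at hint
  have hpos : ∀ t ∈ Ioi (0 : ℝ), 0 < (1 - Real.exp (-t)) * t ^ (-(3 / 2) : ℝ) :=
    fun t (ht : 0 < t) => mul_pos (sub_pos.2 (Real.exp_lt_one_iff.2 (neg_lt_zero.2 ht)))
      (Real.rpow_pos_of_pos ht _)
  rw [setIntegral_pos_iff_support_of_nonneg_ae
    (ae_restrict_of_forall_mem measurableSet_Ioi fun t ht => (hpos t ht).le) hint,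
    inter_eq_right.2 fun t ht => Function.mem_support.2 (hpos t ht).ne', Real.volume_Ioi]
  exact ENNReal.zero_lt_top

theorem integral_one_sub_exp_neg_mul_mul_rpow {a : ℝ} (ha : 0 ≤ a) :
    ∫ t in Ioi (0 : ℝ), (1 - Real.exp (-(a * t))) * t ^ (-(3 / 2) : ℝ) =
      √a * ∫ t in Ioi (0 : ℝ), (1 - Real.exp (-t)) * t ^ (-(3 / 2) : ℝ) := by
  rcases ha.eq_or_lt with rfl | ha
  · simp
  have hscale := integral_comp_mul_left_Ioi (fun s => (1 - Real.exp (-s)) * s ^ (-(3 / 2) : ℝ))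
    0 ha
  rw [mul_zero, smul_eq_mul, setIntegral_congr_fun measurableSet_Ioi
    (g := fun t => a ^ (-(3 / 2) : ℝ) * ((1 - Real.exp (-(a * t))) * t ^ (-(3 / 2) : ℝ)))
    fun t (ht : 0 < t) => by simp only [Real.mul_rpow ha.le ht.le]; ring,
    integral_const_mul] at hscale
  have hpow : (a ^ (-(3 / 2) : ℝ))⁻¹ * a⁻¹ = √a := by
    rw [Real.rpow_neg ha.le, inv_inv, ← Real.rpow_neg_one, ← Real.rpow_add ha,
      Real.sqrt_eq_rpow]
    norm_num
  rw [← hpow, mul_assoc, ← hscale, ← mul_assoc, inv_mul_cancel₀ (by positivity), one_mul]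

section InnerProductSpace

variable {ι E : Type*} [Fintype ι] [NormedAddCommGroup E] [InnerProductSpace ℝ E]

theorem posSemidef_exp_neg_mul_norm_sub_sq (x : ι → E) {t : ℝ} (ht : 0 ≤ t) :
    (of fun i j => Real.exp (-(t * ‖x i - x j‖ ^ 2))).PosSemidef := by
  convert ((posSemidef_gram ℝ x).smul (a := 2 * t) (by positivity)).exp_add_add
    (fun i => -(t * ‖x i‖ ^ 2)) using 1
  ext i j
  simp only [of_apply, Matrix.smul_apply, gram_apply, norm_sub_sq_real, smul_eq_mul]
  congr 1
  ring

theorem sum_mul_mul_norm_sub_nonpos (x : ι → E) {v : ι → ℝ} (hv : ∑ i, v i = 0) :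
    ∑ i, ∑ j, v i * v j * ‖x i - x j‖ ≤ 0 := by
  set C := ∫ t in Ioi (0 : ℝ), (1 - Real.exp (-t)) * t ^ (-(3 / 2) : ℝ)
  let f : ι → ι → ℝ → ℝ := fun i j t =>
    v i * v j * ((1 - Real.exp (-(‖x i - x j‖ ^ 2 * t))) * t ^ (-(3 / 2) : ℝ))
  have hf : ∀ i j, IntegrableOn (f i j) (Ioi 0) := fun i j =>
    (integrableOn_one_sub_exp_neg_mul_mul_rpow (by positivity)).const_mul _
  have hrepr : (∑ i, ∑ j, v i * v j * ‖x i - x j‖) * C = ∫ t in Ioi 0, ∑ i, ∑ j, f i j t := by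
    rw [integral_finsetSum _ fun i _ => integrable_finsetSum _ fun j _ => hf i j,
      Finset.sum_mul]
    refine Fintype.sum_congr _ _ fun i => ?_
    rw [integral_finsetSum _ fun j _ => hf i j, Finset.sum_mul]
    refine Fintype.sum_congr _ _ fun j => ?_
    rw [integral_const_mul, integral_one_sub_exp_neg_mul_mul_rpow (by positivity),
      Real.sqrt_sq (norm_nonneg _), mul_assoc]
  have hpointwise : ∀ t ∈ Ioi (0 : ℝ), ∑ i, ∑ j, f i j t ≤ 0 := fun t (ht : 0 < t) => by
    have hgauss := (posSemidef_iff_sum_mul_mul_nonneg.1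
      (posSemidef_exp_neg_mul_norm_sub_sq x ht.le)).2 v
    have hsplit : ∑ i, ∑ j, f i j t = ((∑ i, v i) * (∑ j, v j)
        - ∑ i, ∑ j, v i * v j * Real.exp (-(t * ‖x i - x j‖ ^ 2))) * t ^ (-(3 / 2) : ℝ) := by
      rw [Finset.sum_mul_sum, ← Finset.sum_sub_distrib]
      simp only [f, ← Finset.sum_sub_distrib, Finset.sum_mul]
      refine Fintype.sum_congr _ _ fun i => Fintype.sum_congr _ _ fun j => ?_
      rw [mul_comm t]
      ring
    rw [hsplit, hv, zero_mul, zero_sub]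
    exact mul_nonpos_of_nonpos_of_nonneg (neg_nonpos.2 hgauss) (Real.rpow_nonneg ht.le _)
  exact nonpos_of_mul_nonpos_left (hrepr ▸ setIntegral_nonpos measurableSet_Ioi hpointwise)
    integral_one_sub_exp_neg_mul_rpow_pos

theorem posSemidef_norm_add_norm_sub_norm_sub (x : ι → E) :
    (of fun i j => ‖x i‖ + ‖x j‖ - ‖x i - x j‖).PosSemidef := by
  refine posSemidef_iff_sum_mul_mul_nonneg.2 ⟨?_, fun v => ?_⟩
  · ext i j
    simp only [conjTranspose_apply, of_apply, star_trivial, norm_sub_rev (x j)]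
    ring
  set S := ∑ i, v i
  set T := ∑ i, v i * ‖x i‖
  set D := ∑ i, ∑ j, v i * v j * ‖x i - x j‖
  have hcnd : -(2 * S * T) + D ≤ 0 := by
    have h := sum_mul_mul_norm_sub_nonpos (fun o : Option ι => o.elim 0 x)
      (v := fun o => o.elim (-S) v) (by simp [Fintype.sum_option, S])
    simp only [Fintype.sum_option, Option.elim_none, Option.elim_some, norm_zero, zero_sub,
      sub_zero, norm_neg, mul_zero, zero_add] at h
    convert h using 1
    rw [Finset.sum_add_distrib, ← add_assoc, ← Finset.sum_add_distrib, Finset.mul_sum,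
      ← Finset.sum_neg_distrib]
    exact congrArg (· + D) (Fintype.sum_congr _ _ fun i => by ring)
  have hexpand : ∑ i, ∑ j, v i * v j * of (fun i j => ‖x i‖ + ‖x j‖ - ‖x i - x j‖) i j =
      T * S + S * T - D := by
    rw [Finset.sum_mul_sum, Finset.sum_mul_sum]
    simp only [of_apply, D, ← Finset.sum_add_distrib, ← Finset.sum_sub_distrib]
    exact Fintype.sum_congr _ _ fun i => Fintype.sum_congr _ _ fun j => by ring
  linarith

theorem posSemidef_exp_neg_mul_norm_sub (x : ι → E) {c : ℝ} (hc : 0 ≤ c) :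
    (of fun i j => Real.exp (-(c * ‖x i - x j‖))).PosSemidef := by
  convert ((posSemidef_norm_add_norm_sub_norm_sub x).smul (a := c) hc).exp_add_add
    (fun i => -(c * ‖x i‖)) using 1
  ext i j
  simp only [of_apply, Matrix.smul_apply, smul_eq_mul]
  congr 1
  ring

end InnerProductSpace

theorem laplace_kernel_posSemidef_general (n : ℕ) (σ : ℝ)
    (q : ℕ) (x : Fin q → EuclideanSpace ℝ (Fin n)) (α : Fin q → ℝ) :
    0 ≤ ∑ i, ∑ j, α i * α j * Real.exp (-‖x i - x j‖ / σ ^ 2) := by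
  have h := (posSemidef_iff_sum_mul_mul_nonneg.1
    (posSemidef_exp_neg_mul_norm_sub x (c := (σ ^ 2)⁻¹) (by positivity))).2 α
  simpa [neg_div, div_eq_inv_mul] using h

/-- The Laplace kernel `K(x,y) = exp(-‖x-y‖₂/σ²)` on `ℝⁿ` is positive
semidefinite for every `σ ≠ 0`. -/
theorem laplace_kernel_posSemidef (n : ℕ) (σ : ℝ) (hσ : σ ≠ 0)
    (q : ℕ) (x : Fin q → EuclideanSpace ℝ (Fin n)) (α : Fin q → ℝ) :
    0 ≤ ∑ i, ∑ j, α i * α j * Real.exp (-‖x i - x j‖ / σ ^ 2) :=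
  laplace_kernel_posSemidef_general n σ q x α
end

section
/- (Representer theorem / optimal recovery) Let H be a Hilbert space of real-valued functions on a set X with reproducing kernel K. Let X_1,…,X_N ∈ X have invertible Gram matrix Θ (Θ_{ij} = K(X_i,X_j)) and let Y ∈ ℝ^N. Then v*(·) = ∑_{i,j=1}^N Y_i (Θ^{-1})_{ij} K(X_j,·) is the unique minimal-norm interpolant: v* ∈ H, v*(X_k) = Y_k for all k, and for every g ∈ H with g(X_k) = Y_k for all k one has ‖v*‖_H ≤ ‖g‖_H, with equality only if g = v*. -/
open scoped RealInnerProductSpace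

/-- Representer theorem / optimal recovery: with invertible Gram matrix
`Θ_{ij} = K(X_i, X_j)`, the element
`v* = ∑_{i,j} Y_i (Θ⁻¹)_{ij} K(X_j, ·)` of `H` is the unique minimal-norm
interpolant of the data `(X_k, Y_k)`. -/
theorem representer_theorem {X H : Type*} [NormedAddCommGroup H]
    [InnerProductSpace ℝ H] [CompleteSpace H]
    (ι : H →ₗ[ℝ] (X → ℝ)) (hinj : Function.Injective ι)
    (K : X × X → ℝ) (Kx : X → H)
    (hsect : ∀ x : X, ι (Kx x) = fun y => K (x, y))
    (hrepro : ∀ (f : H) (x : X), ι f x = ⟪f, Kx x⟫)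
    (N : ℕ) (Xp : Fin N → X) (Y : Fin N → ℝ)
    (Θ : Matrix (Fin N) (Fin N) ℝ)
    (hΘ : Θ = fun i j => K (Xp i, Xp j)) (hΘinv : IsUnit Θ)
    (vstar : H)
    (hv : vstar = ∑ i, ∑ j, (Y i * Θ⁻¹ i j) • Kx (Xp j)) :
    (∀ k : Fin N, ι vstar (Xp k) = Y k) ∧
      ∀ g : H, (∀ k : Fin N, ι g (Xp k) = Y k) →
        ‖vstar‖ ≤ ‖g‖ ∧ (‖vstar‖ = ‖g‖ → g = vstar) := by
  have hdet : IsUnit Θ.det := (Matrix.isUnit_iff_isUnit_det Θ).mp hΘinv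
  have hgram : ∀ j k, ⟪Kx (Xp j), Kx (Xp k)⟫ = Θ j k := by
    intro j k
    rw [← hrepro]
    rw [hsect, hΘ]
  have hinterp : ∀ k, ι vstar (Xp k) = Y k := by
    intro k
    have hΘΘ : Θ⁻¹ * Θ = 1 := Matrix.nonsing_inv_mul Θ hdet
    rw [hrepro, hv]
    simp only [sum_inner, real_inner_smul_left, hgram]
    calc ∑ i, ∑ j, Y i * Θ⁻¹ i j * Θ j k
        = ∑ i, Y i * ((Θ⁻¹ * Θ) i k) := by
          simp [Matrix.mul_apply, Finset.mul_sum, mul_assoc]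
      _ = Y k := by simp [hΘΘ, Matrix.one_apply]
  refine ⟨hinterp, fun g hg => ?_⟩
  have hvan : ∀ k, ⟪g - vstar, Kx (Xp k)⟫ = 0 := by
    intro k
    have h1 := hrepro (g - vstar) (Xp k)
    rw [map_sub] at h1
    simp only [Pi.sub_apply, hg k, hinterp k, sub_self] at h1
    exact h1.symm
  have horth : ⟪vstar, g - vstar⟫ = 0 := by
    rw [real_inner_comm]
    nth_rewrite 2 [hv]
    simp only [inner_sum, real_inner_smul_right, hvan, mul_zero, Finset.sum_const_zero]
  have hsq : ‖g‖ ^ 2 = ‖vstar‖ ^ 2 + ‖g - vstar‖ ^ 2 := by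
    have hdecomp : g = vstar + (g - vstar) := by abel
    calc ‖g‖ ^ 2 = ‖vstar + (g - vstar)‖ ^ 2 := by rw [← hdecomp]
      _ = ‖vstar‖ ^ 2 + 2 * ⟪vstar, g - vstar⟫ + ‖g - vstar‖ ^ 2 := by
          rw [← norm_add_sq_real]
      _ = ‖vstar‖ ^ 2 + ‖g - vstar‖ ^ 2 := by rw [horth]; ring
  have hle : ‖vstar‖ ≤ ‖g‖ := by
    nlinarith [norm_nonneg g, norm_nonneg vstar, sq_nonneg ‖g - vstar‖]
  refine ⟨hle, fun heq => ?_⟩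
  rw [heq] at hsq
  have : ‖g - vstar‖ ^ 2 = 0 := by linarith
  have : g - vstar = 0 := by
    have := sq_eq_zero_iff.mp this
    exact norm_eq_zero.mp this
  exact sub_eq_zero.mp this
end

section
/- (Kernel Flows loss representation) Let H be a Hilbert space of real-valued functions on a set X with reproducing kernel K. Let X^b = (X_1,…,X_N) be points in X with invertible Gram matrix Θ^b (entries K(X_i,X_j)), let Y^b ∈ ℝ^N, let S ⊆ {1,…,N} be an index subset such that the sub-Gram matrix Θ^c (entries K(X_i,X_j) for i,j ∈ S) is invertible, and let X^c, Y^c be the corresponding subvectors of X^b, Y^b. Let u^b(·) = ∑_{i,j} Y^b_i ((Θ^b)^{-1})_{ij} K(X^b_j, ·) and u^c(·) = ∑_{i,j ∈ S} Y^c_i ((Θ^c)^{-1})_{ij} K(X^c_j, ·) be the kernel interpolants of the full data and the sub-data. If Y^b ≠ 0, then ‖u^b − u^c‖²_H / ‖u^b‖²_H = 1 − ((Y^c)ᵀ (Θ^c)^{-1} Y^c) / ((Y^b)ᵀ (Θ^b)^{-1} Y^b). -/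
open scoped RealInnerProductSpace

/-- Kernel Flows loss representation: if `u^b` is the kernel interpolant of the
full data `(X_i, Y^b_i)_{i=1..N}` (with invertible Gram matrix `Θ^b`) and `u^c`
is the kernel interpolant of the sub-data indexed by `S ⊆ {1,…,N}` (with
invertible sub-Gram matrix `Θ^c`), and `Y^b ≠ 0`, then
`‖u^b − u^c‖² / ‖u^b‖² = 1 − ((Y^c)ᵀ (Θ^c)⁻¹ Y^c) / ((Y^b)ᵀ (Θ^b)⁻¹ Y^b)`. -/
theorem kernel_flows_loss_representation {X H : Type*} [NormedAddCommGroup H]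
    [InnerProductSpace ℝ H] [CompleteSpace H]
    (ι : H →ₗ[ℝ] (X → ℝ)) (hinj : Function.Injective ι)
    (K : X × X → ℝ) (Kx : X → H)
    (hsect : ∀ x : X, ι (Kx x) = fun y => K (x, y))
    (hrepro : ∀ (f : H) (x : X), ι f x = ⟪f, Kx x⟫)
    (N : ℕ) (Xp : Fin N → X) (Yb : Fin N → ℝ)
    (S : Finset (Fin N))
    (Θb : Matrix (Fin N) (Fin N) ℝ)
    (hΘb : Θb = fun i j => K (Xp i, Xp j)) (hΘbinv : IsUnit Θb)
    (Θc : Matrix {i // i ∈ S} {i // i ∈ S} ℝ)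
    (hΘc : Θc = fun i j => K (Xp i.1, Xp j.1)) (hΘcinv : IsUnit Θc)
    (ub uc : H)
    (hub : ub = ∑ i, ∑ j, (Yb i * Θb⁻¹ i j) • Kx (Xp j))
    (huc : uc = ∑ i : {i // i ∈ S}, ∑ j : {i // i ∈ S},
      (Yb i.1 * Θc⁻¹ i j) • Kx (Xp j.1))
    (hYb : Yb ≠ 0) :
    ‖ub - uc‖ ^ 2 / ‖ub‖ ^ 2 =
      1 - (∑ i : {i // i ∈ S}, ∑ j : {i // i ∈ S}, Yb i.1 * Θc⁻¹ i j * Yb j.1) /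
        (∑ i, ∑ j, Yb i * Θb⁻¹ i j * Yb j) := by
  have hdetb : IsUnit Θb.det := (Matrix.isUnit_iff_isUnit_det _).mp hΘbinv
  have hdetc : IsUnit Θc.det := (Matrix.isUnit_iff_isUnit_det _).mp hΘcinv
  have hinvb : Θb⁻¹ * Θb = 1 := Matrix.nonsing_inv_mul _ hdetb
  have hinvc : Θc⁻¹ * Θc = 1 := Matrix.nonsing_inv_mul _ hdetc
  have hKK : ∀ x y : X, ⟪Kx x, Kx y⟫ = K (x, y) := fun x y => by
    rw [← hrepro, hsect]
  set b := ∑ i, ∑ j, Yb i * Θb⁻¹ i j * Yb j with hbdef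
  set c := ∑ i : {i // i ∈ S}, ∑ j : {i // i ∈ S}, Yb i.1 * Θc⁻¹ i j * Yb j.1
    with hcdef
  -- interpolation property of ub
  have hubi : ∀ m, ⟪ub, Kx (Xp m)⟫ = Yb m := by
    intro m
    rw [hub]
    simp only [sum_inner, real_inner_smul_left, hKK]
    have h1 : ∀ i j : Fin N, Yb i * Θb⁻¹ i j * K (Xp j, Xp m)
        = Yb i * Θb⁻¹ i j * Θb j m := by intro i j; rw [hΘb]
    simp only [h1]
    calc ∑ i, ∑ j, Yb i * Θb⁻¹ i j * Θb j m
        = ∑ i, Yb i * ((Θb⁻¹ * Θb) i m) := by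
          refine Finset.sum_congr rfl fun i _ => ?_
          rw [Matrix.mul_apply, Finset.mul_sum]
          exact Finset.sum_congr rfl fun j _ => by ring
      _ = Yb m := by
          rw [hinvb]
          simp [Matrix.one_apply]
  -- interpolation property of uc
  have huci : ∀ m : {i // i ∈ S}, ⟪uc, Kx (Xp m.1)⟫ = Yb m.1 := by
    intro m
    rw [huc]
    simp only [sum_inner, real_inner_smul_left, hKK]
    have h1 : ∀ i j : {i // i ∈ S}, Yb i.1 * Θc⁻¹ i j * K (Xp j.1, Xp m.1)
        = Yb i.1 * Θc⁻¹ i j * Θc j m := by intro i j; rw [hΘc]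
    simp only [h1]
    calc ∑ i : {i // i ∈ S}, ∑ j : {i // i ∈ S}, Yb i.1 * Θc⁻¹ i j * Θc j m
        = ∑ i : {i // i ∈ S}, Yb i.1 * ((Θc⁻¹ * Θc) i m) := by
          refine Finset.sum_congr rfl fun i _ => ?_
          rw [Matrix.mul_apply, Finset.mul_sum]
          exact Finset.sum_congr rfl fun j _ => by ring
      _ = Yb m.1 := by
          rw [hinvc]
          simp [Matrix.one_apply]
  have hb_eq : ∀ v : H, (∀ m, ⟪v, Kx (Xp m)⟫ = Yb m) → ⟪v, ub⟫ = b := by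
    intro v hv
    rw [hub]
    simp only [inner_sum, real_inner_smul_right, hv, hbdef]
  have hc_eq : ∀ v : H, (∀ m : {i // i ∈ S}, ⟪v, Kx (Xp m.1)⟫ = Yb m.1) →
      ⟪v, uc⟫ = c := by
    intro v hv
    rw [huc]
    simp only [inner_sum, real_inner_smul_right, hv, hcdef]
  have hbb : ⟪ub, ub⟫ = b := hb_eq ub hubi
  have hbc : ⟪ub, uc⟫ = c := hc_eq ub fun m => hubi m.1
  have hcc : ⟪uc, uc⟫ = c := hc_eq uc huci
  have hub_norm : ‖ub‖ ^ 2 = b := by rw [← real_inner_self_eq_norm_sq, hbb]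
  have hub_ne : ub ≠ 0 := by
    intro h
    apply hYb
    funext m
    have := hubi m
    rw [h] at this
    simpa using this.symm
  have hbne : b ≠ 0 := by
    rw [← hub_norm]
    exact pow_ne_zero _ (norm_ne_zero_iff.mpr hub_ne)
  have hsub : ‖ub - uc‖ ^ 2 = b - c := by
    have h2 : ⟪uc, ub⟫ = c := by rw [real_inner_comm]; exact hbc
    rw [← real_inner_self_eq_norm_sq, inner_sub_left, inner_sub_right,
      inner_sub_right, hbb, hbc, hcc, h2]
    ring
  rw [hsub, hub_norm]
  field_simp
end

section
/- (Pointwise error bound for kernel interpolation) Let H be a Hilbert space of real-valued functions on a set X with reproducing kernel K. Let X_1,…,X_N ∈ X have invertible Gram matrix Θ (Θ_{ij} = K(X_i,X_j)), let f† ∈ H, set Y_k = f†(X_k), and let f(·) = ∑_{i,j=1}^N Y_i (Θ^{-1})_{ij} K(X_j,·) be the kernel interpolant. Then for every x ∈ X, |f†(x) − f(x)| ≤ σ(x) ‖f†‖_H, where σ(x) = √(K(x,x) − k(x)ᵀ Θ^{-1} k(x)) and k(x) ∈ ℝ^N is the vector with entries k(x)_i = K(x, X_i). -/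
open scoped RealInnerProductSpace

/-- Pointwise error bound for kernel interpolation: if `f† ∈ H`, `Y_k = f†(X_k)`,
the Gram matrix `Θ_{ij} = K(X_i,X_j)` is invertible, and
`f(·) = ∑_{i,j} Y_i (Θ⁻¹)_{ij} K(X_j,·)` is the kernel interpolant, then for every
`x`, `|f†(x) − f(x)| ≤ σ(x) ‖f†‖`, where
`σ(x) = √(K(x,x) − k(x)ᵀ Θ⁻¹ k(x))` and `k(x)_i = K(x, X_i)`. -/
theorem kernel_interpolation_pointwise_error_bound {X H : Type*}
    [NormedAddCommGroup H] [InnerProductSpace ℝ H] [CompleteSpace H]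
    (ι : H →ₗ[ℝ] (X → ℝ)) (hinj : Function.Injective ι)
    (K : X × X → ℝ) (Kx : X → H)
    (hsect : ∀ x : X, ι (Kx x) = fun y => K (x, y))
    (hrepro : ∀ (f : H) (x : X), ι f x = ⟪f, Kx x⟫)
    (N : ℕ) (Xp : Fin N → X)
    (Θ : Matrix (Fin N) (Fin N) ℝ)
    (hΘ : Θ = fun i j => K (Xp i, Xp j)) (hΘinv : IsUnit Θ)
    (fdag : H) (Y : Fin N → ℝ) (hY : ∀ k : Fin N, Y k = ι fdag (Xp k))
    (f : X → ℝ)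
    (hf : f = fun x => ∑ i, ∑ j, Y i * Θ⁻¹ i j * K (Xp j, x)) :
    ∀ x : X, |ι fdag x - f x| ≤
      Real.sqrt (K (x, x) - ∑ i, ∑ j, K (x, Xp i) * Θ⁻¹ i j * K (x, Xp j))
        * ‖fdag‖ := by
  have hK : ∀ a b : X, K (a, b) = ⟪Kx a, Kx b⟫ := by
    intro a b
    rw [← hrepro (Kx a) b, hsect a]
  have hKsymm : ∀ a b : X, K (a, b) = K (b, a) := by
    intro a b; rw [hK, hK, real_inner_comm]
  intro x
  set k : Fin N → ℝ := fun i => K (x, Xp i) with hk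
  set c : Fin N → ℝ := Θ⁻¹.mulVec k with hc
  have hci : ∀ i, c i = ∑ j, Θ⁻¹ i j * k j := by
    intro i; simp [hc, Matrix.mulVec, dotProduct]
  have hΘc : Θ.mulVec c = k := by
    rw [hc, Matrix.mulVec_mulVec,
      Matrix.mul_nonsing_inv _ ((Matrix.isUnit_iff_isUnit_det Θ).mp hΘinv),
      Matrix.one_mulVec]
  have hΘck : ∀ i, ∑ j, Θ i j * c j = k i := by
    intro i
    have := congrFun hΘc i
    simpa [Matrix.mulVec, dotProduct] using this
  set v : H := ∑ i, c i • Kx (Xp i) with hv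
  set w : H := Kx x - v with hw
  have hKxv : ⟪Kx x, v⟫ = ∑ i, c i * k i := by
    rw [hv, inner_sum]
    refine Finset.sum_congr rfl fun i _ => ?_
    rw [real_inner_smul_right, ← hK]
  have hfv : ⟪fdag, v⟫ = ∑ i, Y i * c i := by
    rw [hv, inner_sum]
    refine Finset.sum_congr rfl fun i _ => ?_
    rw [real_inner_smul_right, ← hrepro, ← hY, mul_comm]
  have hvv : ⟪v, v⟫ = ∑ i, c i * k i := by
    rw [hv, sum_inner]
    have : ∀ i, ⟪c i • Kx (Xp i), v⟫ = c i * k i := by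
      intro i
      rw [real_inner_smul_left, hv, inner_sum]
      congr 1
      have : ∀ j, ⟪Kx (Xp i), c j • Kx (Xp j)⟫ = Θ i j * c j := by
        intro j
        rw [real_inner_smul_right, ← hK, hΘ]
        ring
      rw [Finset.sum_congr rfl fun j _ => this j, hΘck]
    exact Finset.sum_congr rfl fun i _ => this i
  have hdiff : ι fdag x - f x = ⟪fdag, w⟫ := by
    rw [hw, inner_sub_right, hfv, hrepro, hf]
    congr 1
    refine Finset.sum_congr rfl fun i _ => ?_
    rw [hci, Finset.mul_sum]
    refine Finset.sum_congr rfl fun j _ => ?_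
    rw [hk]
    rw [hKsymm (Xp j) x]
    ring
  have hquad : ∑ i, ∑ j, K (x, Xp i) * Θ⁻¹ i j * K (x, Xp j) = ∑ i, c i * k i := by
    refine Finset.sum_congr rfl fun i _ => ?_
    rw [hci, Finset.sum_mul]
    refine Finset.sum_congr rfl fun j _ => ?_
    simp only [hk]
    ring
  have hww : ⟪w, w⟫ = K (x, x) - ∑ i, ∑ j, K (x, Xp i) * Θ⁻¹ i j * K (x, Xp j) := by
    have hvKx : ⟪v, Kx x⟫ = ∑ i, c i * k i := by rw [real_inner_comm]; exact hKxv
    rw [hquad, hw, inner_sub_sub_self, hKxv, hvv, hvKx, ← hK]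
    ring
  have hnorm : Real.sqrt (K (x, x) - ∑ i, ∑ j, K (x, Xp i) * Θ⁻¹ i j * K (x, Xp j))
      = ‖w‖ := by
    rw [← hww, real_inner_self_eq_norm_sq, Real.sqrt_sq (norm_nonneg w)]
  rw [hdiff, hnorm]
  calc |⟪fdag, w⟫| ≤ ‖fdag‖ * ‖w‖ := abs_real_inner_le_norm fdag w
    _ = ‖w‖ * ‖fdag‖ := mul_comm _ _
end

section
/- (MMD representation) Let X be a measurable space, H a Hilbert space of real-valued functions on X with reproducing kernel K such that x ↦ K(x,·) is measurable as a map into H. Let P and Q be Borel probability measures on X such that ∫ √(K(x,x)) dP(x) < ∞ and ∫ √(K(y,y)) dQ(y) < ∞, so that the kernel mean embeddings μ_P = ∫ K(x,·) dP(x) and μ_Q = ∫ K(y,·) dQ(y) (Bochner integrals in H) exist. Then ‖μ_P − μ_Q‖²_H = ∫∫ K(x,x') dP(x) dP(x') + ∫∫ K(y,y') dQ(y) dQ(y') − 2 ∫∫ K(x,y) dP(x) dQ(y). -/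
open scoped RealInnerProductSpace
open MeasureTheory

/-- MMD representation: for a measurable space `X`, an RKHS `H` on `X` with kernel
`K` whose kernel-section map `x ↦ K(x,·)` is (strongly) measurable into `H`, and
Borel probability measures `P, Q` with `∫ √K(x,x) dP < ∞` and `∫ √K(y,y) dQ < ∞`
(so the kernel mean embeddings `μ_P = ∫ K(x,·) dP` and `μ_Q = ∫ K(y,·) dQ` exist
as Bochner integrals), one has
`‖μ_P − μ_Q‖² = ∬ K dP dP + ∬ K dQ dQ − 2 ∬ K dP dQ`. -/
theorem mmd_representation {X H : Type*} [MeasurableSpace X]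
    [NormedAddCommGroup H] [InnerProductSpace ℝ H] [CompleteSpace H]
    (ι : H →ₗ[ℝ] (X → ℝ)) (hinj : Function.Injective ι)
    (K : X × X → ℝ) (Kx : X → H)
    (hsect : ∀ x : X, ι (Kx x) = fun y => K (x, y))
    (hrepro : ∀ (f : H) (x : X), ι f x = ⟪f, Kx x⟫)
    (hmeas : StronglyMeasurable Kx)
    (P Q : Measure X) [IsProbabilityMeasure P] [IsProbabilityMeasure Q]
    (hP : Integrable (fun x => Real.sqrt (K (x, x))) P)
    (hQ : Integrable (fun y => Real.sqrt (K (y, y))) Q) :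
    ‖(∫ x, Kx x ∂P) - ∫ y, Kx y ∂Q‖ ^ 2 =
      (∫ x, ∫ x', K (x, x') ∂P ∂P) + (∫ y, ∫ y', K (y, y') ∂Q ∂Q)
        - 2 * ∫ x, ∫ y, K (x, y) ∂Q ∂P := by
  have hKi : ∀ x y, K (x, y) = ⟪Kx x, Kx y⟫ := fun x y => by
    rw [← hrepro (Kx x) y, hsect]
  have hnorm : ∀ x, ‖Kx x‖ = Real.sqrt (K (x, x)) := fun x => by
    rw [hKi x x, real_inner_self_eq_norm_sq, Real.sqrt_sq (norm_nonneg _)]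
  have hIntP : Integrable Kx P := hP.mono' hmeas.aestronglyMeasurable
    (Filter.Eventually.of_forall fun x => (hnorm x).le)
  have hIntQ : Integrable Kx Q := hQ.mono' hmeas.aestronglyMeasurable
    (Filter.Eventually.of_forall fun x => (hnorm x).le)
  have hgen : ∀ (μ ν : Measure X), Integrable Kx μ → Integrable Kx ν →
      ⟪∫ x, Kx x ∂μ, ∫ y, Kx y ∂ν⟫ = ∫ x, ∫ y, K (x, y) ∂ν ∂μ := by
    intro μ ν hμ hν
    rw [real_inner_comm, ← integral_inner hμ]
    refine integral_congr_ae (Filter.Eventually.of_forall fun x => ?_)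
    dsimp only
    rw [real_inner_comm, ← integral_inner hν]
    exact integral_congr_ae (Filter.Eventually.of_forall fun y => (hKi x y).symm)
  rw [norm_sub_sq_real, ← real_inner_self_eq_norm_sq, ← real_inner_self_eq_norm_sq,
    hgen P P hIntP hIntP, hgen Q Q hIntQ hIntQ, hgen P Q hIntP hIntQ]
  ring
end
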